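/- arXiv:1909.00135 — 3 statements merged into one kernel-verified Lean document; each statement's English description precedes it below -/
import Mathlib

section
/- Let p > n be a prime. For all but at most O(p^{⌊n/2⌋+1}) monic polynomials f ∈ F_p[X] of degree n, the polynomials f_{u,v}(X) = u^n f(u^{-1}(X+v)), as (u,v) ranges over F_p* × F_p, are pairwise distinct. -/
/-!
If `f_{u,v} = f_{u',v'}` for two distinct pairs, then `f` is fixed by a nontrivial element `(s, t)`
of the affine group acting through `f ↦ f_{s,t}`. Translations (`s = 1`) move every monic
polynomial of degree `n < p`, as the coefficient of `X^(n-1)` shows, so `s ≠ 1` and `(s, t)` fixes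
a point `x₀`. Recentring there, `g = f(X + x₀)` satisfies `g(X) = s^n g(s⁻¹X)`, so the coefficient
of `X^k` vanishes unless the order `d ≥ 2` of `s` divides `n - k`. Such a `g` is determined by
`⌊n/d⌋ ≤ ⌊n/2⌋` coefficients; with fewer than `n` choices of `d` (orders above `n` may be replaced
by `2`) and `p` choices of `x₀` this leaves `O(p^(⌊n/2⌋+1))` polynomials `f`.
-/

open Polynomial Function

namespace Polynomial

variable {R : Type*} [CommRing R]

lemma taylor_surjective (r : R) : Surjective (taylor r) :=
  fun g => ⟨taylor (-r) g, by rw [taylor_taylor, add_neg_cancel, taylor_zero]⟩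

lemma Monic.coeff_taylor_natDegree_sub_one {f : R[X]} (hf : f.Monic) (hdeg : 0 < f.natDegree)
    (t : R) :
    (taylor t f).coeff (f.natDegree - 1) = f.coeff (f.natDegree - 1) + f.natDegree * t := by
  set n := f.natDegree
  have hD : (hasseDeriv (n - 1) f).natDegree ≤ 1 := (natDegree_hasseDeriv_le f _).trans (by omega)
  have hD1 : (hasseDeriv (n - 1) f).coeff 1 = n := by
    rw [hasseDeriv_coeff, show 1 + (n - 1) = n by omega,
      Nat.choose_symm_of_eq_add (show n = (n - 1) + 1 by omega), Nat.choose_one_right,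
      hf.coeff_natDegree, mul_one]
  rw [taylor_coeff, eq_X_add_C_of_natDegree_le_one hD, hD1]
  simp [hasseDeriv_coeff, add_comm]

lemma Monic.taylor {f : R[X]} (hf : f.Monic) (r : R) : (Polynomial.taylor r f).Monic := by
  rw [Monic.def, Polynomial.leadingCoeff, natDegree_taylor, coeff_taylor_natDegree,
    hf.leadingCoeff]

end Polynomial

section AffineTransform

variable {K : Type*} [Field K] (n : ℕ)

-- `affineTransform n (u, v) f` is the paper's `f_{u,v}`.
noncomputable def affineTransform (w : Kˣ × K) (f : K[X]) : K[X] :=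
  C ((w.1 : K) ^ n) * f.comp (C ((w.1⁻¹ : Kˣ) : K) * (X + C w.2))

@[simp]
lemma affineTransform_one_zero (f : K[X]) : affineTransform n (1, 0) f = f := by
  simp [affineTransform]

lemma affineTransform_one (t : K) (f : K[X]) : affineTransform n (1, t) f = taylor t f := by
  simp [affineTransform, taylor_apply]

lemma affineTransform_affineTransform (u u' : Kˣ) (v v' : K) (f : K[X]) :
    affineTransform n (u, v) (affineTransform n (u', v') f) =
      affineTransform n (u * u', v + u * v') f := by
  have hu : C ((u⁻¹ : Kˣ) : K) * C (u : K) = (1 : K[X]) := by rw [← C_mul, u.inv_mul, C_1]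
  have hlin : (C ((u'⁻¹ : Kˣ) : K) * (X + C v')).comp (C ((u⁻¹ : Kˣ) : K) * (X + C v)) =
      C (((u * u')⁻¹ : Kˣ) : K) * (X + C (v + u * v')) := by
    simp only [mul_comp, C_comp, add_comp, X_comp, mul_inv_rev, Units.val_mul, C_mul, C_add]
    linear_combination -(C ((u'⁻¹ : Kˣ) : K) * C v') * hu
  simp only [affineTransform, mul_comp, C_comp, Polynomial.comp_assoc, hlin, Units.val_mul,
    mul_pow, C_mul]
  ring

lemma exists_ne_affineTransform_eq_self {f : K[X]}
    (h : ¬ Injective (fun w => affineTransform n w f)) :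
    ∃ w ≠ (1, 0), affineTransform n w f = f := by
  obtain ⟨⟨u, v⟩, ⟨u', v'⟩, heq, hne⟩ : ∃ w w' : Kˣ × K,
      affineTransform n w f = affineTransform n w' f ∧ w ≠ w' := by
    simpa [Injective] using h
  refine ⟨(u'⁻¹ * u, ((u'⁻¹ : Kˣ) : K) * (v - v')), fun h1 => hne ?_, ?_⟩
  · simp only [Prod.mk.injEq, inv_mul_eq_one, mul_eq_zero, Units.ne_zero, sub_eq_zero,
      false_or] at h1
    rw [h1.1, h1.2]
  · have := congrArg (affineTransform n (u'⁻¹, -(((u'⁻¹ : Kˣ) : K) * v'))) heq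
    rw [affineTransform_affineTransform, affineTransform_affineTransform, inv_mul_cancel,
      neg_add_cancel, affineTransform_one_zero] at this
    rwa [mul_sub, ← neg_add_eq_sub]

lemma affineTransform_taylor_of_affineTransform_eq_self {s : Kˣ} (hs : s ≠ 1) {t : K} {f : K[X]}
    (hf : affineTransform n (s, t) f = f) :
    affineTransform n (s, 0) (taylor (((s : K) - 1)⁻¹ * t) f) =
      taylor (((s : K) - 1)⁻¹ * t) f := by
  set x₀ := ((s : K) - 1)⁻¹ * t
  have hx₀ : (s : K) * x₀ = x₀ + t := by
    have : (s : K) - 1 ≠ 0 := sub_ne_zero.2 (Units.val_eq_one.not.2 hs)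
    simp only [x₀]
    field_simp
    ring
  calc affineTransform n (s, 0) (taylor x₀ f)
      = affineTransform n (1 * s, x₀ + (1 : Kˣ) * t) f := by
        rw [← affineTransform_one, affineTransform_affineTransform, mul_one, zero_add, hx₀,
          one_mul, Units.val_one, one_mul]
    _ = taylor x₀ f := by rw [← affineTransform_affineTransform, hf, affineTransform_one]

lemma coeff_eq_zero_of_affineTransform_eq_self {s : Kˣ} {g : K[X]}
    (hg : affineTransform n (s, 0) g = g) {k : ℕ} (hk : k ≤ n) (hsk : ¬ orderOf s ∣ n - k) :
    g.coeff k = 0 := by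
  have hcoeff := congrArg (coeff · k) hg
  simp only [affineTransform, map_zero, add_zero, coeff_C_mul, comp_C_mul_X_coeff] at hcoeff
  have hpow : (s : K) ^ n * ((s⁻¹ : Kˣ) : K) ^ k = ((s ^ (n - k) : Kˣ) : K) := by
    push_cast [pow_sub s hk]
    ring
  have hne : ((s ^ (n - k) : Kˣ) : K) ≠ 1 := by
    rwa [Ne, Units.val_eq_one, ← orderOf_dvd_iff_pow_eq_one]
  have : g.coeff k * (((s ^ (n - k) : Kˣ) : K) - 1) = 0 := by
    linear_combination -hpow * g.coeff k + hcoeff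
  exact (mul_eq_zero.1 this).resolve_right (sub_ne_zero.2 hne)

end AffineTransform

lemma Nat.exists_lt_div_eq_sub_mul {n d k : ℕ} (hk : k < n) (hdk : d ∣ n - k) :
    ∃ j < n / d, k = n - d * (j + 1) := by
  obtain ⟨m, hm⟩ := hdk
  have hd : 0 < d := Nat.pos_of_ne_zero (by rintro rfl; omega)
  have hm0 : 0 < m := Nat.pos_of_ne_zero (by rintro rfl; omega)
  have hmd : m ≤ n / d := (Nat.le_div_iff_mul_le hd).2 (by rw [mul_comm]; omega)
  exact ⟨m - 1, by omega, by rw [Nat.sub_add_cancel hm0]; omega⟩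

section Lacunary

variable {K : Type*} [Field K]

def lacunaryMonic (n d : ℕ) : Set K[X] :=
  {g | g.Monic ∧ g.natDegree = n ∧ ∀ k < n, ¬ d ∣ n - k → g.coeff k = 0}

lemma injOn_lacunaryMonic (n d : ℕ) :
    Set.InjOn (fun (g : K[X]) (j : Fin (n / d)) => g.coeff (n - d * (j + 1)))
      (lacunaryMonic n d) := by
  intro g ⟨hg, hgn, hg0⟩ g' ⟨hg', hg'n, hg'0⟩ hgg'
  ext k
  obtain hk | rfl | hk := lt_trichotomy k n
  · by_cases hdk : d ∣ n - k
    · obtain ⟨j, hj, rfl⟩ := Nat.exists_lt_div_eq_sub_mul hk hdk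
      exact congrFun hgg' ⟨j, hj⟩
    · rw [hg0 k hk hdk, hg'0 k hk hdk]
  · rw [← hgn, hg.coeff_natDegree, hgn, ← hg'n, hg'.coeff_natDegree]
  · rw [coeff_eq_zero_of_natDegree_lt (hgn ▸ hk), coeff_eq_zero_of_natDegree_lt (hg'n ▸ hk)]

lemma lacunaryMonic_finite [Finite K] (n d : ℕ) : (lacunaryMonic n d : Set K[X]).Finite :=
  Set.Finite.of_finite_image (Set.toFinite _) (injOn_lacunaryMonic n d)

lemma ncard_lacunaryMonic_le [Finite K] (n d : ℕ) :
    (lacunaryMonic n d : Set K[X]).ncard ≤ Nat.card K ^ (n / d) := by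
  calc (lacunaryMonic n d : Set K[X]).ncard ≤ (Set.univ : Set (Fin (n / d) → K)).ncard :=
        Set.ncard_le_ncard_of_injOn _ (fun _ _ => Set.mem_univ _) (injOn_lacunaryMonic n d)
    _ = Nat.card K ^ (n / d) := by simp [Set.ncard_univ, Nat.card_fun]

lemma exists_taylor_mem_lacunaryMonic {n : ℕ} (hn : 2 ≤ n) (hnK : (n : K) ≠ 0) {f : K[X]}
    (hf : f.Monic) (hfn : f.natDegree = n)
    (h : ¬ Injective (fun w => affineTransform n w f)) :
    ∃ d ∈ Finset.Icc 2 n, ∃ x₀ : K, taylor x₀ f ∈ lacunaryMonic n d := by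
  obtain ⟨⟨s, t⟩, hst, hfix⟩ := exists_ne_affineTransform_eq_self n h
  have hs : s ≠ 1 := by
    rintro rfl
    rw [affineTransform_one] at hfix
    have hcoeff := hf.coeff_taylor_natDegree_sub_one (by omega) t
    rw [hfix, hfn, left_eq_add, mul_eq_zero] at hcoeff
    exact hst (by rw [hcoeff.resolve_left hnK])
  set g := taylor (((s : K) - 1)⁻¹ * t) f
  have hg : g.Monic ∧ g.natDegree = n := ⟨hf.taylor _, by rw [natDegree_taylor, hfn]⟩
  have hg0 : ∀ k < n, ¬ orderOf s ∣ n - k → g.coeff k = 0 := fun k hk =>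
    coeff_eq_zero_of_affineTransform_eq_self n
      (affineTransform_taylor_of_affineTransform_eq_self n hs hfix) hk.le
  by_cases hord : orderOf s ∈ Finset.Icc 2 n
  · exact ⟨orderOf s, hord, _, hg.1, hg.2, hg0⟩
  · refine ⟨2, Finset.mem_Icc.2 ⟨le_rfl, hn⟩, _, hg.1, hg.2,
      fun k hk _ => hg0 k hk fun hdvd => ?_⟩
    -- an order outside `[2, n]` is `0` or exceeds `n`, so it divides no `n - k` with `k < n`
    have hord1 : orderOf s ≠ 1 := by rwa [Ne, orderOf_eq_one_iff]
    have hle := Nat.le_of_dvd (by omega) hdvd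
    have hpos := Nat.pos_of_dvd_of_pos hdvd (by omega)
    exact hord (Finset.mem_Icc.2 ⟨by omega, by omega⟩)

lemma ncard_setOf_not_injective_affineTransform_le [Finite K] {n : ℕ} (hn : 2 ≤ n)
    (hnK : (n : K) ≠ 0) :
    {f : K[X] | f.Monic ∧ f.natDegree = n ∧ ¬ Injective (fun w => affineTransform n w f)}.ncard
      ≤ (n - 1) * Nat.card K ^ (n / 2 + 1) := by
  have := Fintype.ofFinite K
  set U := ⋃ i : Finset.Icc 2 n × K, taylor i.2 ⁻¹' lacunaryMonic n i.1
  have hsub : {f : K[X] | f.Monic ∧ f.natDegree = n ∧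
      ¬ Injective (fun w => affineTransform n w f)} ⊆ U := by
    rintro f ⟨hf, hfn, h⟩
    obtain ⟨d, hd, x₀, hx₀⟩ := exists_taylor_mem_lacunaryMonic hn hnK hf hfn h
    exact Set.mem_iUnion.2 ⟨(⟨d, hd⟩, x₀), hx₀⟩
  have hU : U.Finite := Set.finite_iUnion fun i =>
    (lacunaryMonic_finite n i.1).preimage (taylor_injective i.2).injOn
  have hpiece (i : Finset.Icc 2 n × K) :
      (taylor i.2 ⁻¹' lacunaryMonic n i.1).ncard ≤ Nat.card K ^ (n / 2) := by
    rw [Set.ncard_preimage_of_injective_subset_range (taylor_injective i.2)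
      (Set.subset_range_of_surjective (taylor_surjective i.2) _)]
    exact (ncard_lacunaryMonic_le n i.1).trans (Nat.pow_le_pow_right Nat.card_pos
      (Nat.div_le_div_left (Finset.mem_Icc.1 i.1.2).1 two_pos))
  calc _ ≤ U.ncard := Set.ncard_le_ncard hsub hU
    _ ≤ ∑ i : Finset.Icc 2 n × K, (taylor i.2 ⁻¹' lacunaryMonic n i.1).ncard :=
      Set.ncard_iUnion_le_of_fintype _
    _ ≤ ∑ _i : Finset.Icc 2 n × K, Nat.card K ^ (n / 2) :=
      Finset.sum_le_sum fun i _ => hpiece i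
    _ = (n - 1) * Nat.card K ^ (n / 2 + 1) := by
      simp only [Finset.sum_const, Finset.card_univ, Fintype.card_prod, Fintype.card_coe,
        Nat.card_Icc, smul_eq_mul, show n + 1 - 2 = n - 1 by omega, Nat.card_eq_fintype_card]
      ring

end Lacunary

/-- Let `p > n` be a prime. For all but at most `O(p^(⌊n/2⌋+1))` monic polynomials
`f ∈ 𝔽_p[X]` of degree `n`, the polynomials `f_{u,v}(X) = u^n f(u⁻¹(X+v))`, as `(u,v)` ranges
over `𝔽_p* × 𝔽_p`, are pairwise distinct. The implied constant depends only on `n`. -/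
theorem fuv_pairwise_distinct_outside_small_set (n : ℕ) :
    ∃ C : ℕ, ∀ p : ℕ, p.Prime → n < p →
      Set.ncard {f : Polynomial (ZMod p) | f.Monic ∧ f.natDegree = n ∧
        ¬ Function.Injective (fun w : (ZMod p)ˣ × ZMod p =>
            Polynomial.C ((w.1 : ZMod p) ^ n) *
              f.comp (Polynomial.C ((w.1⁻¹ : (ZMod p)ˣ) : ZMod p)
                * (Polynomial.X + Polynomial.C w.2)))} ≤ C * p ^ (n / 2 + 1) := by
  refine ⟨n + 1, fun p hp hnp => ?_⟩
  have : Fact p.Prime := ⟨hp⟩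
  change {f : (ZMod p)[X] | f.Monic ∧ f.natDegree = n ∧
    ¬ Injective (fun w => affineTransform n w f)}.ncard ≤ _
  rcases lt_or_ge n 2 with hn | hn
  · calc _ ≤ (lacunaryMonic n 1 : Set (ZMod p)[X]).ncard :=
          Set.ncard_le_ncard (fun f hf => ⟨hf.1, hf.2.1, fun _ _ h => (h (one_dvd _)).elim⟩)
            (lacunaryMonic_finite n 1)
      _ ≤ p ^ (n / 2 + 1) := (ncard_lacunaryMonic_le n 1).trans <| by
          rw [Nat.card_zmod]
          exact Nat.pow_le_pow_right hp.pos (by omega)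
      _ ≤ (n + 1) * p ^ (n / 2 + 1) := Nat.le_mul_of_pos_left _ n.succ_pos
  · have hnp' : (n : ZMod p) ≠ 0 := by
      rw [Ne, ZMod.natCast_eq_zero_iff]
      exact fun h => (Nat.le_of_dvd (by omega) h).not_gt hnp
    calc _ ≤ (n - 1) * p ^ (n / 2 + 1) := by
          simpa [Nat.card_zmod] using ncard_setOf_not_injective_affineTransform_le hn hnp'
      _ ≤ (n + 1) * p ^ (n / 2 + 1) := Nat.mul_le_mul_right _ (by omega)
end

section
/- Let p > n be a prime, f a monic polynomial of degree n over F_p with at most n distinct roots forming the set A in an algebraic closure. If there exist (s,t) ≠ (u,v) in F_p* × F_p with f_{s,t} = f_{u,v}, then there exists a nontrivial affine map x ↦ ax + b over the algebraic closure of F_p with (a,b) ≠ (1,0) such that A = aA + b (the affine map permutes the root set of f). -/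
open Polynomial

/-- Let `p > n` be a prime, `f` monic of degree `n` over `𝔽_p`, and `A` the set of roots of `f`
in an algebraic closure. If `f_{s,t} = f_{u,v}` for some `(s,t) ≠ (u,v)` in `𝔽_p* × 𝔽_p`, then
there is a nontrivial affine map `x ↦ ax + b` over the algebraic closure, `(a,b) ≠ (1,0)`,
fixing the root set: `A = aA + b`. -/
theorem affine_map_fixes_roots (p n : ℕ) [Fact p.Prime] (hpn : n < p)
    (f : Polynomial (ZMod p)) (hm : f.Monic) (hdeg : f.natDegree = n)
    (s u : (ZMod p)ˣ) (t v : ZMod p) (hne : (s, t) ≠ (u, v))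
    (heq :
      Polynomial.C ((s : ZMod p) ^ n) *
          f.comp (Polynomial.C ((s⁻¹ : (ZMod p)ˣ) : ZMod p)
            * (Polynomial.X + Polynomial.C t)) =
        Polynomial.C ((u : ZMod p) ^ n) *
          f.comp (Polynomial.C ((u⁻¹ : (ZMod p)ˣ) : ZMod p)
            * (Polynomial.X + Polynomial.C v))) :
    ∃ a b : AlgebraicClosure (ZMod p), a ≠ 0 ∧ (a, b) ≠ (1, 0) ∧
      (fun x => a * x + b) '' {x : AlgebraicClosure (ZMod p) | Polynomial.aeval x f = 0} =
        {x : AlgebraicClosure (ZMod p) | Polynomial.aeval x f = 0} := by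
  set K := AlgebraicClosure (ZMod p)
  let ι : ZMod p →+* K := algebraMap (ZMod p) K
  have hinj : Function.Injective ι := (algebraMap (ZMod p) K).injective
  -- key consequence of heq
  have key : ∀ x : K,
      (aeval (ι ((s⁻¹ : (ZMod p)ˣ) : ZMod p) * (x + ι t)) f = 0) ↔
      (aeval (ι ((u⁻¹ : (ZMod p)ˣ) : ZMod p) * (x + ι v)) f = 0) := by
    intro x
    have h := congrArg (aeval x) heq
    simp only [map_mul, aeval_comp, map_add, aeval_C, aeval_X] at h
    have hs : (ι ((s : ZMod p) ^ n)) ≠ 0 := by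
      simp only [ne_eq, map_eq_zero_iff ι hinj]
      exact pow_ne_zero _ (Units.ne_zero s)
    have hu : (ι ((u : ZMod p) ^ n)) ≠ 0 := by
      simp only [ne_eq, map_eq_zero_iff ι hinj]
      exact pow_ne_zero _ (Units.ne_zero u)
    constructor
    · intro h0
      rw [h0, mul_zero] at h
      exact (mul_eq_zero.mp h.symm).resolve_left hu
    · intro h0
      rw [h0, mul_zero] at h
      exact (mul_eq_zero.mp h).resolve_left hs
  refine ⟨ι ((u⁻¹ * s : (ZMod p)ˣ) : ZMod p), ι (((u⁻¹ : (ZMod p)ˣ) : ZMod p) * (v - t)),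
    ?_, ?_, ?_⟩
  · simp only [ne_eq, map_eq_zero_iff ι hinj]
    exact Units.ne_zero _
  · intro hab
    have h1 : ι ((u⁻¹ * s : (ZMod p)ˣ) : ZMod p) = 1 := congrArg Prod.fst hab
    have h2 : ι (((u⁻¹ : (ZMod p)ˣ) : ZMod p) * (v - t)) = 0 := congrArg Prod.snd hab
    rw [← map_one ι] at h1
    rw [← map_zero ι] at h2
    have h1' : (u⁻¹ * s : (ZMod p)ˣ) = 1 := Units.ext (hinj h1)
    have h2' : ((u⁻¹ : (ZMod p)ˣ) : ZMod p) * (v - t) = 0 := hinj h2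
    have hsu : s = u := by
      have := mul_eq_one_iff_inv_eq.mp h1'
      rw [inv_inv] at this; exact this.symm
    have htv : t = v := by
      rcases mul_eq_zero.mp h2' with h | h
      · exact absurd h (Units.ne_zero _)
      · linear_combination -h
    exact hne (by rw [hsu, htv])
  · -- facts for algebra
    have hsinv : ι ((s : ZMod p)) * ι ((s⁻¹ : (ZMod p)ˣ) : ZMod p) = 1 := by
      rw [← map_mul, ← Units.val_mul, mul_inv_cancel, Units.val_one, map_one]
    have huinv : ι ((u : ZMod p)) * ι ((u⁻¹ : (ZMod p)ˣ) : ZMod p) = 1 := by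
      rw [← map_mul, ← Units.val_mul, mul_inv_cancel, Units.val_one, map_one]
    have hmul : ι ((u⁻¹ * s : (ZMod p)ˣ) : ZMod p)
        = ι ((u⁻¹ : (ZMod p)ˣ) : ZMod p) * ι ((s : ZMod p)) := by
      rw [← map_mul]; norm_cast
    have hsub : ι (((u⁻¹ : (ZMod p)ˣ) : ZMod p) * (v - t))
        = ι ((u⁻¹ : (ZMod p)ˣ) : ZMod p) * (ι v - ι t) := by
      rw [map_mul, map_sub]
    ext z
    simp only [Set.mem_image, Set.mem_setOf_eq]
    constructor
    · rintro ⟨y, hy, rfl⟩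
      have hx := (key (ι ((s : ZMod p)) * y - ι t)).mp (by
        have : ι ((s⁻¹ : (ZMod p)ˣ) : ZMod p) * (ι ((s : ZMod p)) * y - ι t + ι t) = y := by
          rw [sub_add_cancel, ← mul_assoc, mul_comm (ι ((s⁻¹ : (ZMod p)ˣ) : ZMod p)),
            hsinv, one_mul]
        rw [this]; exact hy)
      have heqz : ι ((u⁻¹ : (ZMod p)ˣ) : ZMod p) * (ι ((s : ZMod p)) * y - ι t + ι v)
          = ι ((u⁻¹ * s : (ZMod p)ˣ) : ZMod p) * y
            + ι (((u⁻¹ : (ZMod p)ˣ) : ZMod p) * (v - t)) := by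
        rw [hmul, hsub]; ring
      rw [heqz] at hx
      exact hx
    · intro hz
      refine ⟨ι ((s⁻¹ : (ZMod p)ˣ) : ZMod p) * (ι ((u : ZMod p)) * z - ι v + ι t), ?_, ?_⟩
      · apply (key (ι ((u : ZMod p)) * z - ι v)).mpr
        have : ι ((u⁻¹ : (ZMod p)ˣ) : ZMod p) * (ι ((u : ZMod p)) * z - ι v + ι v) = z := by
          rw [sub_add_cancel, ← mul_assoc, mul_comm (ι ((u⁻¹ : (ZMod p)ˣ) : ZMod p)),
            huinv, one_mul]
        rw [this]; exact hz
      · rw [hmul, hsub]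
        have h1 : ι ((u⁻¹ : (ZMod p)ˣ) : ZMod p) * ι ((s : ZMod p)) *
            (ι ((s⁻¹ : (ZMod p)ˣ) : ZMod p) * (ι ((u : ZMod p)) * z - ι v + ι t))
            = ι ((u⁻¹ : (ZMod p)ˣ) : ZMod p) * (ι ((u : ZMod p)) * z - ι v + ι t) := by
          have : ι ((s : ZMod p)) * (ι ((s⁻¹ : (ZMod p)ˣ) : ZMod p) *
              (ι ((u : ZMod p)) * z - ι v + ι t))
              = ι ((u : ZMod p)) * z - ι v + ι t := by
            rw [← mul_assoc, hsinv, one_mul]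
          rw [mul_assoc, this]
        rw [h1]
        have h2 : ι ((u⁻¹ : (ZMod p)ˣ) : ZMod p) * (ι ((u : ZMod p)) * z) = z := by
          rw [← mul_assoc, mul_comm (ι ((u⁻¹ : (ZMod p)ˣ) : ZMod p)), huinv, one_mul]
        calc ι ((u⁻¹ : (ZMod p)ˣ) : ZMod p) * (ι ((u : ZMod p)) * z - ι v + ι t)
            + ι ((u⁻¹ : (ZMod p)ˣ) : ZMod p) * (ι v - ι t)
            = ι ((u⁻¹ : (ZMod p)ˣ) : ZMod p) * (ι ((u : ZMod p)) * z) := by ring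
          _ = z := h2
end

section
/- Let n ≥ 2 and H ≥ 2. Consider trinomials X^n + aX − b with H/2 ≤ a ≤ H, 1 ≤ b ≤ H/(3n), a ≡ 0 (mod 2), b ≡ 2 (mod 4). All such trinomials are irreducible over ℚ (by Eisenstein at 2), and distinct pairs (a,b) in this range give distinct values of (n-1)^{n-1}a^n + n^n b^{n-1}; hence the number of distinct polynomial discriminants of irreducible monic degree-n polynomials with coefficients of absolute value at most H is ≫ H². -/
open Polynomial

/-- The discriminant of `f`, computed in the algebraic closure via
`(-1)^(n(n-1)/2) ∏_{roots r of f} f'(r)` (valid for monic `f`). -/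
noncomputable def discAC {K : Type*} [Field K] (f : Polynomial K) : AlgebraicClosure K :=
  (-1) ^ (f.natDegree * (f.natDegree - 1) / 2) *
    (((f.map (algebraMap K (AlgebraicClosure K))).roots).map
      (fun r => ((Polynomial.derivative f).map (algebraMap K (AlgebraicClosure K))).eval r)).prod

-- The discriminant of `f` as an element of the base field.
open Classical in
noncomputable def polyDisc {K : Type*} [Field K] (f : Polynomial K) : K :=
  if h : ∃ d : K, algebraMap K (AlgebraicClosure K) d = discAC f then h.choose else 0

/-!
Eisenstein's criterion at `2` makes every `X ^ n + a X - b` with `a` even and `b ≡ 2 (mod 4)`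
irreducible. For a root `r` of `f = X ^ n + a X - b` one has
`r f'(r) = n b - (n - 1) a r = (n - 1) a (x - r)` with `x = n b / ((n - 1) a)`, so
`∏ f'(r) · ∏ r = ((n - 1) a) ^ n f(x) = b ((n - 1) ^ (n - 1) a ^ n + n ^ n b ^ (n - 1))`, and
`∏ r = ± b`: the discriminant is `± ((n - 1) ^ (n - 1) a ^ n + n ^ n b ^ (n - 1))`. While
`n b ≤ (n - 1) a`, raising `a` by at least one increases `(n - 1) ^ (n - 1) a ^ n` by at least
`n ((n - 1) a) ^ (n - 1) ≥ n ^ n b ^ (n - 1)`, more than the `b`-term can compensate, so distinct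
pairs `(a, b)` give distinct discriminants; there are `≫ H ^ 2 / n` such pairs of height `≤ H`.
-/

theorem le_two_mul_mul_div {H k : ℕ} (hk : 0 < k) (hkH : k ≤ H) : H ≤ 2 * k * (H / k) := by
  have h₁ := Nat.lt_mul_div_succ H hk
  have h₂ : 1 ≤ H / k := (Nat.one_le_div_iff hk).mpr hkH
  nlinarith

theorem finite_setOf_natDegree_le_coeff_mem {R : Type*} [Semiring R] (d : ℕ) {U : Set R}
    (hU : U.Finite) : {f : R[X] | f.natDegree ≤ d ∧ ∀ i, f.coeff i ∈ U}.Finite := by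
  refine Set.Finite.of_finite_image (f := fun (f : R[X]) (i : Fin (d + 1)) => f.coeff i)
    ((Set.Finite.pi fun _ => hU).subset ?_) ?_
  · rintro _ ⟨f, hf, rfl⟩ i -
    exact hf.2 i
  · intro f hf g hg hfg
    refine (ext_iff_natDegree_le hf.1 hg.1).2 fun i hi => congr_fun hfg ⟨i, Nat.lt_succ_of_le hi⟩

section Trinomial

variable {R : Type*} [CommRing R] {n : ℕ}

theorem map_trinomial {S : Type*} [CommRing S] (φ : R →+* S) (a b : R) :
    (X ^ n + C a * X - C b : R[X]).map φ = X ^ n + C (φ a) * X - C (φ b) := by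
  simp

theorem coeff_trinomial (hn : 2 ≤ n) (a b : R) (i : ℕ) :
    (X ^ n + C a * X - C b : R[X]).coeff i =
      if i = n then 1 else if i = 1 then a else if i = 0 then -b else 0 := by
  simp only [coeff_sub, coeff_add, coeff_X_pow, coeff_C_mul_X, coeff_C]
  split_ifs <;> first | omega | simp

theorem monic_trinomial (hn : 2 ≤ n) (a b : R) : (X ^ n + C a * X - C b : R[X]).Monic := by
  rw [add_sub_assoc]
  refine monic_X_pow_add ((degree_sub_le _ _).trans_lt (max_lt ?_ ?_))
  · exact (degree_C_mul_X_le a).trans_lt (by exact_mod_cast hn)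
  · exact (degree_C_le).trans_lt (by exact_mod_cast (by omega : 0 < n))

theorem natDegree_trinomial [Nontrivial R] (hn : 2 ≤ n) (a b : R) :
    (X ^ n + C a * X - C b : R[X]).natDegree = n := by
  refine natDegree_eq_of_le_of_coeff_ne_zero ?_ ?_
  · refine natDegree_le_iff_coeff_eq_zero.mpr fun i hi => ?_
    have : n < i := by exact_mod_cast hi
    simp [coeff_trinomial hn, show i ≠ n by omega, show i ≠ 1 by omega, show i ≠ 0 by omega]
  · simp [coeff_trinomial hn]

theorem isEisensteinAt_trinomial {P : Ideal R} (hP : P ≠ ⊤) (hn : 2 ≤ n) {a b : R}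
    (ha : a ∈ P) (hb : b ∈ P) (hb2 : b ∉ P ^ 2) :
    (X ^ n + C a * X - C b : R[X]).IsEisensteinAt P := by
  have : Nontrivial R :=
    nontrivial_of_ne 0 1 fun h => (Ideal.ne_top_iff_one P).mp hP (h ▸ P.zero_mem)
  refine ⟨?_, fun {i} hi => ?_, ?_⟩
  · rw [(monic_trinomial hn a b).leadingCoeff]
    exact (Ideal.ne_top_iff_one P).mp hP
  · rw [natDegree_trinomial hn] at hi
    rw [coeff_trinomial hn]
    split_ifs <;> first | omega | simp [hb]
  · simpa [coeff_trinomial hn, show (0 : ℕ) ≠ n by omega] using hb2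

theorem irreducible_trinomial_of_eisenstein [IsDomain R] {P : Ideal R} (hP : P.IsPrime)
    (hn : 2 ≤ n) {a b : R} (ha : a ∈ P) (hb : b ∈ P) (hb2 : b ∉ P ^ 2) :
    Irreducible (X ^ n + C a * X - C b : R[X]) :=
  (isEisensteinAt_trinomial hP.ne_top hn ha hb hb2).irreducible hP
    (monic_trinomial hn a b).isPrimitive (by rw [natDegree_trinomial hn]; omega)

end Trinomial

theorem irreducible_trinomial_rat_of_prime {p : ℤ} (hp : Prime p) {n : ℕ} (hn : 2 ≤ n) {a b : ℤ}
    (ha : p ∣ a) (hb : p ∣ b) (hb2 : ¬ p ^ 2 ∣ b) :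
    Irreducible (X ^ n + C (a : ℚ) * X - C (b : ℚ)) := by
  have hirr : Irreducible (X ^ n + C a * X - C b : ℤ[X]) :=
    irreducible_trinomial_of_eisenstein ((Ideal.span_singleton_prime hp.ne_zero).mpr hp) hn
      (Ideal.mem_span_singleton.mpr ha) (Ideal.mem_span_singleton.mpr hb)
      (by rwa [Ideal.span_singleton_pow, Ideal.mem_span_singleton])
  simpa using (IsPrimitive.Int.irreducible_iff_irreducible_map_cast
    (monic_trinomial hn a b).isPrimitive).mp hirr

theorem irreducible_trinomial_rat_of_emod {n : ℕ} (hn : 2 ≤ n) {a b : ℤ} (ha : a % 2 = 0)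
    (hb : b % 4 = 2) : Irreducible (X ^ n + C (a : ℚ) * X - C (b : ℚ)) :=
  irreducible_trinomial_rat_of_prime Int.prime_two hn (by omega) (by omega) (by norm_num; omega)

def trinomialDisc {R : Type*} [CommRing R] (n : ℕ) (a b : R) : R :=
  ((n - 1 : ℕ) : R) ^ (n - 1) * a ^ n + (n : R) ^ n * b ^ (n - 1)

theorem map_trinomialDisc {R S : Type*} [CommRing R] [CommRing S] (φ : R →+* S) (n : ℕ) (a b : R) :
    φ (trinomialDisc n a b) = trinomialDisc n (φ a) (φ b) := by
  simp [trinomialDisc]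

theorem pow_mul_trinomial_eq {R : Type*} [CommRing R] {n : ℕ} (hn : 1 ≤ n) {c e x : R}
    (hx : ((n : R) - 1) * c * x = n * e) :
    (((n : R) - 1) * c) ^ n * (x ^ n + c * x - e) = e * trinomialDisc n c e := by
  obtain ⟨m, rfl⟩ : ∃ m, n = m + 1 := ⟨n - 1, by omega⟩
  have hpow : ((((m + 1 : ℕ) : R) - 1) * c * x) ^ (m + 1) =
      ((m + 1 : ℕ) : R) ^ (m + 1) * e ^ (m + 1) := by
    rw [hx, mul_pow]
  simp only [trinomialDisc, Nat.add_sub_cancel]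
  push_cast at hx hpow ⊢
  linear_combination hpow + (m * c) ^ m * c * hx

theorem prod_derivative_eval_roots_trinomial {L : Type*} [Field L] {n : ℕ} (hn : 2 ≤ n)
    {c e : L} (hsplit : (X ^ n + C c * X - C e).Splits) (hc : ((n : L) - 1) * c ≠ 0)
    (he : e ≠ 0) :
    ((X ^ n + C c * X - C e).roots.map
        fun r => (derivative (X ^ n + C c * X - C e)).eval r).prod =
      (-1) ^ (n + 1) * trinomialDisc n c e := by
  set F : L[X] := X ^ n + C c * X - C e
  have hF : F.Monic := monic_trinomial hn c e
  have hdeg : F.natDegree = n := natDegree_trinomial hn c e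
  set d := ((n : L) - 1) * c with hd
  set x := n * e / d
  have hdx : d * x = n * e := mul_div_cancel₀ _ hc
  clear_value d x
  have hsign : ∀ k : ℕ, (-1 : L) ^ k * (-1) ^ k = 1 := fun k => by
    rw [← mul_pow, neg_one_mul, neg_neg, one_pow]
  have hprod : F.roots.prod = (-1) ^ (n + 1) * e := by
    have h0 := hsplit.coeff_zero_eq_prod_roots_of_monic hF
    simp only [F, hdeg, coeff_sub, coeff_add, coeff_X_pow, coeff_C_mul_X, coeff_C] at h0
    simp only [show 0 ≠ n by omega, zero_ne_one, ↓reduceIte, zero_add, zero_sub] at h0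
    linear_combination -(-1) ^ n * h0 - F.roots.prod * hsign n
  have hroot : ∀ r ∈ F.roots, (derivative F).eval r * r = d * (x - r) := by
    intro r hr
    have hr0 : r ^ n + c * r - e = 0 := by simpa [F] using isRoot_of_mem_roots hr
    obtain ⟨m, rfl⟩ : ∃ m, n = m + 1 := ⟨n - 1, by omega⟩
    simp only [F, derivative_sub, derivative_add, derivative_X_pow, derivative_C_mul_X,
      derivative_C, eval_sub, eval_add, eval_mul, eval_C, eval_pow, eval_X, eval_zero,
      Nat.add_sub_cancel, Nat.cast_add, Nat.cast_one]
    push_cast at hd hdx ⊢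
    linear_combination (m + 1 : L) * hr0 - hdx + r * hd
  have key : (F.roots.map fun r => (derivative F).eval r).prod * F.roots.prod =
      e * trinomialDisc n c e := by
    have hid : F.roots.prod = (F.roots.map fun r => r).prod := by rw [Multiset.map_id']
    rw [hid, ← Multiset.prod_map_mul, Multiset.map_congr rfl hroot, Multiset.prod_map_mul,
      Multiset.map_const', Multiset.prod_replicate,
      ← hsplit.eval_eq_prod_roots_of_monic hF, (splits_iff_card_roots.mp hsplit).trans hdeg,
      show F.eval x = x ^ n + c * x - e by simp [F], hd]
    exact pow_mul_trinomial_eq (by omega) (hd ▸ hdx)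
  rw [hprod] at key
  refine mul_left_cancel₀ he ?_
  linear_combination (-1) ^ (n + 1) * key -
    e * (F.roots.map fun r => (derivative F).eval r).prod * hsign (n + 1)

theorem polyDisc_eq_of_algebraMap_eq {K : Type*} [Field K] {f : K[X]} {q : K}
    (h : algebraMap K (AlgebraicClosure K) q = discAC f) : polyDisc f = q := by
  have hex : ∃ d : K, algebraMap K (AlgebraicClosure K) d = discAC f := ⟨q, h⟩
  rw [polyDisc, dif_pos hex]
  exact (algebraMap K _).injective (hex.choose_spec.trans h.symm)

theorem polyDisc_trinomial {K : Type*} [Field K] {n : ℕ} (hn : 2 ≤ n) {a b : K}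
    (ha : ((n : K) - 1) * a ≠ 0) (hb : b ≠ 0) :
    polyDisc (X ^ n + C a * X - C b) =
      (-1) ^ (n * (n - 1) / 2 + (n + 1)) * trinomialDisc n a b := by
  set φ := algebraMap K (AlgebraicClosure K)
  refine polyDisc_eq_of_algebraMap_eq ?_
  have ha' : ((n : AlgebraicClosure K) - 1) * φ a ≠ 0 := by
    simpa using (map_ne_zero φ).mpr ha
  rw [discAC, natDegree_trinomial hn, ← derivative_map, map_trinomial,
    prod_derivative_eval_roots_trinomial hn (IsAlgClosed.splits _) ha' ((map_ne_zero φ).mpr hb),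
    map_mul, map_trinomialDisc, pow_add]
  simp [φ, mul_assoc]

theorem trinomialDisc_lt_trinomialDisc {n : ℕ} (hn : 2 ≤ n) {a₁ a₂ b₁ b₂ : ℤ} (ha₂ : 0 ≤ a₂)
    (ha : a₂ < a₁) (hb₁ : 1 ≤ b₁) (hb₂ : 0 ≤ b₂) (hab : n * b₂ ≤ (n - 1) * a₂) :
    trinomialDisc n a₂ b₂ < trinomialDisc n a₁ b₁ := by
  obtain ⟨m, rfl⟩ : ∃ m, n = m + 1 := ⟨n - 1, by omega⟩
  simp only [trinomialDisc, Nat.add_sub_cancel]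
  push_cast at hab ⊢
  have hbern : a₂ ^ (m + 1) + (m + 1) * a₂ ^ m ≤ a₁ ^ (m + 1) := by
    have h := pow_add_mul_le_add_pow ha₂ (b := a₁ - a₂) (by linarith) (m + 1)
    push_cast at h
    simp only [add_sub_cancel] at h
    have hstep : (m + 1) * a₂ ^ m * 1 ≤ (m + 1) * a₂ ^ m * (a₁ - a₂) :=
      mul_le_mul_of_nonneg_left (by linarith) (by positivity)
    linarith
  have hb : ((m + 1) * b₂) ^ m ≤ (m * a₂) ^ m :=
    pow_le_pow_left₀ (by positivity) (by linarith) m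
  have hb₁ : 1 ≤ b₁ ^ m := one_le_pow₀ hb₁
  have hm : (0 : ℤ) ≤ (m : ℤ) ^ m := by positivity
  have hN : (0 : ℤ) < ((m : ℤ) + 1) ^ (m + 1) := by positivity
  rw [mul_pow, mul_pow] at hb
  rw [pow_succ ((m : ℤ) + 1)] at hN ⊢
  linarith [mul_le_mul_of_nonneg_left hbern hm, mul_le_mul_of_nonneg_left hb₁ hN.le,
    mul_le_mul_of_nonneg_left hb (by positivity : (0 : ℤ) ≤ m + 1)]

def Admissible (n H : ℕ) (p : ℤ × ℤ) : Prop :=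
  (H : ℤ) ≤ 2 * p.1 ∧ p.1 ≤ H ∧ 1 ≤ p.2 ∧ 3 * (n : ℤ) * p.2 ≤ H ∧ p.1 % 2 = 0 ∧ p.2 % 4 = 2

namespace Admissible

variable {n H : ℕ} {p : ℤ × ℤ}

theorem snd_mem_Ioc (hn : 1 ≤ n) (h : Admissible n H p) : p.2 ∈ Set.Ioc 0 (H : ℤ) := by
  obtain ⟨-, -, h3, h4, -, -⟩ := h
  refine ⟨by omega, ?_⟩
  nlinarith

theorem fst_mem_Ioc (hn : 1 ≤ n) (h : Admissible n H p) : p.1 ∈ Set.Ioc 0 (H : ℤ) := by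
  have := (h.snd_mem_Ioc hn).1
  obtain ⟨h1, h2, -, h4, -, -⟩ := h
  refine ⟨?_, h2⟩
  nlinarith

theorem trinomialDisc_lt_of_fst_lt (hn : 2 ≤ n) {q : ℤ × ℤ} (hp : Admissible n H p)
    (hq : Admissible n H q) (hpq : p.1 < q.1) :
    trinomialDisc n p.1 p.2 < trinomialDisc n q.1 q.2 := by
  have hn' : (2 : ℤ) ≤ n := by exact_mod_cast hn
  have ha := (hp.fst_mem_Ioc (by omega)).1
  have hb := (hp.snd_mem_Ioc (by omega)).1
  refine trinomialDisc_lt_trinomialDisc hn ha.le hpq hq.2.2.1 hb.le ?_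
  obtain ⟨h1, -, -, h4, -, -⟩ := hp
  nlinarith

theorem eq_of_trinomialDisc_eq (hn : 2 ≤ n) {q : ℤ × ℤ} (hp : Admissible n H p)
    (hq : Admissible n H q) (heq : trinomialDisc n p.1 p.2 = trinomialDisc n q.1 q.2) :
    p = q := by
  rcases lt_trichotomy p.1 q.1 with h | h | h
  · exact absurd heq (trinomialDisc_lt_of_fst_lt hn hp hq h).ne
  · have hpow : p.2 ^ (n - 1) = q.2 ^ (n - 1) := by
      simp only [trinomialDisc, h] at heq
      exact mul_left_cancel₀ (by positivity) (add_left_cancel heq)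
    refine Prod.ext h ((pow_left_inj₀ ?_ ?_ (by omega)).mp hpow)
    · exact (hp.snd_mem_Ioc (by omega)).1.le
    · exact (hq.snd_mem_Ioc (by omega)).1.le
  · exact absurd heq (trinomialDisc_lt_of_fst_lt hn hq hp h).ne'

end Admissible

def irreducibleDiscriminants (n H : ℕ) : Set ℚ :=
  {d | ∃ f : ℤ[X], f.Monic ∧ f.natDegree = n ∧ Irreducible (f.map (Int.castRingHom ℚ)) ∧
    (∀ i, |f.coeff i| ≤ (H : ℤ)) ∧ polyDisc (f.map (Int.castRingHom ℚ)) = d}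

theorem irreducibleDiscriminants_finite (n H : ℕ) : (irreducibleDiscriminants n H).Finite := by
  refine ((finite_setOf_natDegree_le_coeff_mem n (Set.finite_Icc (-(H : ℤ)) H)).image
    fun f => polyDisc (f.map (Int.castRingHom ℚ))).subset ?_
  rintro _ ⟨f, -, hdeg, -, hcoeff, rfl⟩
  exact ⟨f, ⟨hdeg.le, fun i => abs_le.mp (hcoeff i)⟩, rfl⟩

theorem polyDisc_trinomial_of_admissible {n H : ℕ} (hn : 2 ≤ n) {p : ℤ × ℤ}
    (hp : Admissible n H p) :
    polyDisc (X ^ n + C (p.1 : ℚ) * X - C (p.2 : ℚ)) =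
      (-1) ^ (n * (n - 1) / 2 + (n + 1)) * ((trinomialDisc n p.1 p.2 : ℤ) : ℚ) := by
  have ha := (hp.fst_mem_Ioc (by omega)).1
  have hb := (hp.snd_mem_Ioc (by omega)).1
  rw [polyDisc_trinomial hn]
  · exact congrArg _ (map_trinomialDisc (Int.castRingHom ℚ) n p.1 p.2).symm
  · refine mul_ne_zero ?_ (by exact_mod_cast ha.ne')
    have : (2 : ℚ) ≤ n := by exact_mod_cast hn
    linarith
  · exact_mod_cast hb.ne'

theorem polyDisc_trinomial_mem_irreducibleDiscriminants {n H : ℕ} (hn : 2 ≤ n) {p : ℤ × ℤ}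
    (hp : Admissible n H p) :
    polyDisc (X ^ n + C (p.1 : ℚ) * X - C (p.2 : ℚ)) ∈ irreducibleDiscriminants n H := by
  have hmap : (X ^ n + C p.1 * X - C p.2 : ℤ[X]).map (Int.castRingHom ℚ) =
      X ^ n + C (p.1 : ℚ) * X - C (p.2 : ℚ) := by
    simp
  obtain ⟨ha₀, haH⟩ := hp.fst_mem_Ioc (by omega)
  obtain ⟨hb₀, hbH⟩ := hp.snd_mem_Ioc (by omega)
  refine ⟨_, monic_trinomial hn _ _, natDegree_trinomial hn _ _, ?_, fun i => ?_, by rw [hmap]⟩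
  · rw [hmap]
    exact irreducible_trinomial_rat_of_emod hn hp.2.2.2.2.1 hp.2.2.2.2.2
  · rw [coeff_trinomial hn]
    split_ifs <;> exact abs_le.mpr ⟨by omega, by omega⟩

theorem ncard_admissible_le_ncard_irreducibleDiscriminants {n : ℕ} (hn : 2 ≤ n) (H : ℕ) :
    {p | Admissible n H p}.ncard ≤ (irreducibleDiscriminants n H).ncard := by
  refine Set.ncard_le_ncard_of_injOn
    (fun p : ℤ × ℤ => polyDisc (X ^ n + C (p.1 : ℚ) * X - C (p.2 : ℚ)))
    (fun p hp => polyDisc_trinomial_mem_irreducibleDiscriminants hn hp) ?_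
    (irreducibleDiscriminants_finite n H)
  intro p hp q hq heq
  simp only [polyDisc_trinomial_of_admissible hn hp, polyDisc_trinomial_of_admissible hn hq] at heq
  refine Admissible.eq_of_trinomialDisc_eq hn hp hq (Int.cast_injective (α := ℚ) ?_)
  exact mul_left_cancel₀ (pow_ne_zero _ (neg_ne_zero.mpr one_ne_zero)) heq

theorem admissible_of_lt_div {n H s t : ℕ} (hs : s < H / 4) (ht : t < H / (12 * n)) :
    Admissible n H (((2 * (H / 4 + 1 + s) : ℕ) : ℤ), ((4 * t + 2 : ℕ) : ℤ)) := by
  have h12 : 0 < 12 * n := Nat.pos_of_ne_zero fun h => by simp [h] at ht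
  have ht' : (t + 1) * (12 * n) ≤ H := (Nat.le_div_iff_mul_le h12).mp ht
  refine ⟨by omega, by omega, by omega, ?_, by omega, by omega⟩
  have : ((t + 1) * (12 * n) : ℤ) ≤ H := by exact_mod_cast ht'
  push_cast
  nlinarith

theorem div_mul_div_le_ncard_admissible {n : ℕ} (hn : 1 ≤ n) (H : ℕ) :
    H / 4 * (H / (12 * n)) ≤ {p | Admissible n H p}.ncard := by
  have hfin : {p | Admissible n H p}.Finite :=
    ((Set.finite_Ioc 0 (H : ℤ)).prod (Set.finite_Ioc 0 (H : ℤ))).subset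
      fun p hp => ⟨hp.fst_mem_Ioc hn, hp.snd_mem_Ioc hn⟩
  have h := Set.ncard_le_ncard_of_injOn
    (s := ↑(Finset.range (H / 4) ×ˢ Finset.range (H / (12 * n))))
    (fun st : ℕ × ℕ => (((2 * (H / 4 + 1 + st.1) : ℕ) : ℤ), ((4 * st.2 + 2 : ℕ) : ℤ)))
    ?_ ?_ hfin
  · rwa [Set.ncard_coe_finset, Finset.card_product, Finset.card_range, Finset.card_range] at h
  · rintro ⟨s, t⟩ hst
    simp only [Finset.coe_product, Set.mem_prod, Finset.mem_coe, Finset.mem_range] at hst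
    exact admissible_of_lt_div hst.1 hst.2
  · rintro ⟨s, t⟩ - ⟨s', t'⟩ - h
    simp only [Prod.mk.injEq] at h ⊢
    omega

/-- Trinomials `X^n + aX − b` with `H/2 ≤ a ≤ H`, `1 ≤ b ≤ H/(3n)`, `a ≡ 0 (mod 2)`,
`b ≡ 2 (mod 4)` are irreducible over `ℚ`; for `H` large enough distinct pairs `(a,b)` in this
range give distinct values of `(n-1)^(n-1)a^n + n^n b^(n-1)`; hence the number of distinct
polynomial discriminants of monic degree-`n` integer polynomials, irreducible over `ℚ`, with
coefficients of absolute value at most `H`, is `≫ H²`. -/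
theorem many_distinct_discriminants (n : ℕ) (hn : 2 ≤ n) :
    (∀ H : ℕ, 2 ≤ H → ∀ a b : ℤ,
        (H : ℤ) ≤ 2 * a → a ≤ (H : ℤ) → 1 ≤ b → 3 * (n : ℤ) * b ≤ (H : ℤ) →
        a % 2 = 0 → b % 4 = 2 →
        Irreducible (Polynomial.X ^ n + Polynomial.C (a : ℚ) * Polynomial.X -
          Polynomial.C (b : ℚ))) ∧
    (∃ H0 : ℕ, ∀ H : ℕ, H0 ≤ H → ∀ a₁ b₁ a₂ b₂ : ℤ,
        ((H : ℤ) ≤ 2 * a₁ ∧ a₁ ≤ (H : ℤ) ∧ 1 ≤ b₁ ∧ 3 * (n : ℤ) * b₁ ≤ (H : ℤ) ∧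
          a₁ % 2 = 0 ∧ b₁ % 4 = 2) →
        ((H : ℤ) ≤ 2 * a₂ ∧ a₂ ≤ (H : ℤ) ∧ 1 ≤ b₂ ∧ 3 * (n : ℤ) * b₂ ≤ (H : ℤ) ∧
          a₂ % 2 = 0 ∧ b₂ % 4 = 2) →
        ((n - 1 : ℕ) : ℤ) ^ (n - 1) * a₁ ^ n + (n : ℤ) ^ n * b₁ ^ (n - 1) =
          ((n - 1 : ℕ) : ℤ) ^ (n - 1) * a₂ ^ n + (n : ℤ) ^ n * b₂ ^ (n - 1) →
        a₁ = a₂ ∧ b₁ = b₂) ∧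
    (∃ c : ℝ, 0 < c ∧ ∃ H0 : ℕ, ∀ H : ℕ, H0 ≤ H →
        c * (H : ℝ) ^ 2 ≤
          (Set.ncard {d : ℚ | ∃ f : Polynomial ℤ, f.Monic ∧ f.natDegree = n ∧
            Irreducible (f.map (Int.castRingHom ℚ)) ∧ (∀ i, |f.coeff i| ≤ (H : ℤ)) ∧
            polyDisc (f.map (Int.castRingHom ℚ)) = d} : ℝ)) := by
  refine ⟨fun H _ a b _ _ _ _ ha hb => irreducible_trinomial_rat_of_emod hn ha hb,
    ⟨0, fun H _ a₁ b₁ a₂ b₂ h₁ h₂ heq =>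
      Prod.ext_iff.mp (Admissible.eq_of_trinomialDisc_eq (p := (a₁, b₁)) (q := (a₂, b₂)) hn h₁ h₂
        heq)⟩,
    1 / (192 * n), by positivity, 12 * n, fun H hH => ?_⟩
  have hsq : H ^ 2 ≤ 192 * n * (H / 4 * (H / (12 * n))) := by
    have h₄ := le_two_mul_mul_div (k := 4) (by norm_num) (by omega : 4 ≤ H)
    have h₁₂ := le_two_mul_mul_div (k := 12 * n) (by omega) hH
    calc H ^ 2 = H * H := sq H
      _ ≤ (2 * 4 * (H / 4)) * (2 * (12 * n) * (H / (12 * n))) := Nat.mul_le_mul h₄ h₁₂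
      _ = 192 * n * (H / 4 * (H / (12 * n))) := by ring
  have hcard := (div_mul_div_le_ncard_admissible (by omega) H).trans
    (ncard_admissible_le_ncard_irreducibleDiscriminants hn H)
  change _ ≤ ((irreducibleDiscriminants n H).ncard : ℝ)
  rw [one_div_mul_eq_div, div_le_iff₀ (by positivity), mul_comm]
  exact_mod_cast hsq.trans (Nat.mul_le_mul_left _ hcard)
end
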